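/- Let n ≥ 1. For the quaternion-type subspace 1̄ := {U ∈ Cl_{p,q} : involute U = −U ∧ reverse U = U}, the real dimension satisfies (as an equality of real numbers) 4 · (Module.finrank ℝ 1̄) = 2^n + 2·(√2)^n · sin(πn/4), i.e. dim 1̄ = 2^{n−2} + 2^{(n−2)/2} sin(πn/4). -/

import Mathlib

/-!
For an orthogonal basis `(eᵢ)` of the quadratic space, the ordered products `e_S = ∏_{i ∈ S} eᵢ`,
`S ⊆ Fin n`, form a basis of the Clifford algebra (Mathlib's basis of the exterior algebra,
transported along `equivExterior`). On `e_S` the grade involution acts by `(-1)^|S|` and the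
reversion by `(-1)^(|S| choose 2)`, so `1̄` is spanned by the `e_S` with `|S| ≡ 1 [MOD 4]`. Counting
these subsets is a roots-of-unity filter: `∑_S x^|S| = (1 + x)^n` evaluated at `x = 1, -1, i`.
-/

open CliffordAlgebra

/-- The quadratic form of signature `(p,q)` on `Fin (p+q) → ℝ`:
`Q(x) = ∑_{i<p} x_i² − ∑_{p≤i<n} x_i²`. -/
noncomputable def Qpq (p q : ℕ) : QuadraticForm ℝ (Fin (p + q) → ℝ) :=
  QuadraticMap.weightedSumSquares ℝ (fun i : Fin (p + q) => if (i : ℕ) < p then (1 : ℝ) else -1)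

/-- The quaternion-type subspace: elements `U` with `involute U = -U` and `reverse U = U`. -/
noncomputable def quatType1 (p q : ℕ) : Submodule ℝ (CliffordAlgebra (Qpq p q)) where
  carrier := {U | involute U = -U ∧ reverse U = U}
  add_mem' := by
    rintro a b ⟨ha1, ha2⟩ ⟨hb1, hb2⟩
    exact ⟨by simp [ha1, hb1]; all_goals abel, by simp [ha2, hb2]; all_goals abel⟩
  zero_mem' := by simp
  smul_mem' := by
    rintro c a ⟨h1, h2⟩
    exact ⟨by rw [map_smul, h1]; all_goals module, by rw [map_smul, h2]; all_goals module⟩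

open Module Finset

namespace CliffordAlgebra

variable {R M : Type*} [CommRing R] [AddCommGroup M] [Module R M] {Q Q' : QuadraticForm R M}

theorem contractLeft_prod_map_ι_eq_zero (d : Module.Dual R M) (l : List M)
    (hl : ∀ x ∈ l, d x = 0) : contractLeft d (l.map (ι Q)).prod = 0 := by
  induction l with
  | nil => simp
  | cons x t ih =>
    rw [List.map_cons, List.prod_cons, contractLeft_ι_mul, hl x List.mem_cons_self,
      ih fun y hy => hl y (List.mem_cons_of_mem x hy), zero_smul, mul_zero, sub_zero]

theorem changeForm_prod_map_ι {B : LinearMap.BilinForm R M} (h : B.toQuadraticMap = Q' - Q)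
    (l : List M) (hl : l.Pairwise fun x y => B x y = 0) :
    changeForm h (l.map (ι Q)).prod = (l.map (ι Q')).prod := by
  induction l with
  | nil => simp
  | cons x t ih =>
    obtain ⟨hx, ht⟩ := List.pairwise_cons.mp hl
    rw [List.map_cons, List.prod_cons, changeForm_ι_mul, ih ht,
      contractLeft_prod_map_ι_eq_zero _ _ hx, sub_zero, List.map_cons, List.prod_cons]

theorem prod_map_ι_mul_ι_of_isOrtho (x : M) (l : List M) (hl : ∀ y ∈ l, Q.IsOrtho x y) :
    (l.map (ι Q)).prod * ι Q x = (-1 : R) ^ l.length • (ι Q x * (l.map (ι Q)).prod) := by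
  induction l with
  | nil => simp
  | cons y t ih =>
    rw [List.map_cons, List.prod_cons, mul_assoc, ih fun z hz => hl z (List.mem_cons_of_mem y hz),
      mul_smul_comm, ← mul_assoc, ι_mul_ι_comm_of_isOrtho (hl y List.mem_cons_self).symm,
      List.length_cons, pow_succ, mul_neg_one, neg_smul, ← smul_neg, neg_mul, mul_assoc]

theorem reverse_prod_map_ι_of_pairwise_isOrtho (l : List M) (hl : l.Pairwise Q.IsOrtho) :
    reverse (l.map (ι Q)).prod = (-1 : R) ^ l.length.choose 2 • (l.map (ι Q)).prod := by
  induction l with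
  | nil => simp
  | cons x t ih =>
    obtain ⟨hx, ht⟩ := List.pairwise_cons.mp hl
    rw [List.map_cons, List.prod_cons, reverse.map_mul, reverse_ι, ih ht, smul_mul_assoc,
      prod_map_ι_mul_ι_of_isOrtho x t hx, smul_smul, ← pow_add, List.length_cons,
      Nat.choose_succ_succ', Nat.choose_one_right, add_comm t.length]

end CliffordAlgebra

theorem ExteriorAlgebra.basis_eq_prod_map_ι {R M I : Type*} [CommRing R] [AddCommGroup M]
    [Module R M] [LinearOrder I] (b : Basis I R M) (s : Finset I) :
    b.ExteriorAlgebra s = (((s.sort (· ≤ ·)).map b).map (ExteriorAlgebra.ι R)).prod := by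
  rw [ExteriorAlgebra.basis_apply, List.map_map, ← s.listMap_orderEmbOfFin_finRange rfl,
    List.map_map, ← List.ofFn_eq_map]
  rfl

namespace Module.Basis

variable {I R M : Type*} [CommRing R] [AddCommGroup M] [Module R M]

theorem repr_apply_eq_mul_of_apply_eq_smul (b : Basis I R M) {f : M →ₗ[R] M} {ε : I → R}
    (hf : ∀ i, f (b i) = ε i • b i) (x : M) (i : I) :
    b.repr (f x) i = ε i * b.repr x i := by
  have : (Finsupp.lapply i ∘ₗ b.repr.toLinearMap) ∘ₗ f =
      ε i • (Finsupp.lapply i ∘ₗ b.repr.toLinearMap) := by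
    refine b.ext fun j => ?_
    obtain rfl | hij := eq_or_ne j i <;> simp [*]
  exact LinearMap.congr_fun this x

theorem apply_eq_smul_iff_support_subset [NoZeroDivisors R] (b : Basis I R M) {f : M →ₗ[R] M}
    {ε : I → R} (hf : ∀ i, f (b i) = ε i • b i) (c : R) (x : M) :
    f x = c • x ↔ ↑(b.repr x).support ⊆ {i | ε i = c} := by
  rw [← b.repr.injective.eq_iff, Finsupp.ext_iff]
  simp only [repr_apply_eq_mul_of_apply_eq_smul b hf, map_smul, Finsupp.smul_apply, smul_eq_mul]
  refine forall_congr' fun i => ?_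
  simp [← sub_eq_zero (a := ε i * _), ← sub_mul, sub_eq_zero, or_iff_not_imp_right]

theorem finrank_span_image [StrongRankCondition R] (b : Basis I R M) (s : Finset I) :
    finrank R (Submodule.span R (b '' s)) = s.card := by
  classical
  have := nontrivial_of_invariantBasisNumber R
  rw [← coe_image, finrank_span_finset_eq_card, card_image_of_injective _ b.injective]
  rw [coe_image]
  exact (b.linearIndependent.linearIndepOn _).id_image

section CliffordAlgebra

variable [LinearOrder I] [Invertible (2 : R)] (Q : QuadraticForm R M) (b : Basis I R M)

noncomputable def cliffordAlgebra : Basis (Finset I) R (CliffordAlgebra Q) :=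
  b.ExteriorAlgebra.map (equivExterior Q).symm

variable {Q b}

-- `equivExterior` only corrects products by contractions against `associated (-Q)`, and these
-- vanish on mutually orthogonal vectors.
theorem cliffordAlgebra_eq_prod (hb : Pairwise fun i j => Q.IsOrtho (b i) (b j))
    (s : Finset I) :
    b.cliffordAlgebra Q s = (((s.sort (· ≤ ·)).map b).map (ι Q)).prod := by
  have hB : ((s.sort (· ≤ ·)).map b).Pairwise
      fun x y => QuadraticMap.associated (-Q) x y = 0 := by
    refine List.pairwise_map.mpr ((s.sort_nodup _).imp fun hij => ?_)
    simp [QuadraticMap.associated_apply, QuadraticMap.isOrtho_def.mp (hb hij)]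
  rw [cliffordAlgebra, map_apply, LinearEquiv.symm_apply_eq,
    _root_.ExteriorAlgebra.basis_eq_prod_map_ι,
    equivExterior, changeFormEquiv_apply, changeForm_prod_map_ι _ _ hB]

theorem involute_cliffordAlgebra (hb : Pairwise fun i j => Q.IsOrtho (b i) (b j))
    (s : Finset I) :
    involute (b.cliffordAlgebra Q s) = (-1 : R) ^ s.card • b.cliffordAlgebra Q s := by
  rw [cliffordAlgebra_eq_prod hb, involute_prod_map_ι, List.length_map, Finset.length_sort]

theorem reverse_cliffordAlgebra (hb : Pairwise fun i j => Q.IsOrtho (b i) (b j))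
    (s : Finset I) :
    reverse (b.cliffordAlgebra Q s) = (-1 : R) ^ s.card.choose 2 • b.cliffordAlgebra Q s := by
  rw [cliffordAlgebra_eq_prod hb, reverse_prod_map_ι_of_pairwise_isOrtho, List.length_map,
    Finset.length_sort]
  exact List.pairwise_map.mpr ((s.sort_nodup _).imp fun hij => hb hij)

end CliffordAlgebra

end Module.Basis

theorem Nat.odd_and_even_choose_two_iff (k : ℕ) : Odd k ∧ Even (k.choose 2) ↔ k % 4 = 1 := by
  induction k using Nat.strong_induction_on with
  | _ k ih =>
    match k with
    | 0 | 1 | 2 | 3 => decide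
    | j + 4 =>
      have hc : (j + 4).choose 2 = j.choose 2 + 2 * (2 * j + 3) := by
        simp [Nat.choose_succ_succ']; ring
      rw [hc, Nat.add_mod_right, ← ih j (by omega)]
      simp [Nat.even_add, parity_simps]

section QuaternionType

variable {R M I : Type*} [CommRing R] [IsDomain R] [Invertible (2 : R)] [AddCommGroup M]
  [Module R M] [LinearOrder I] {Q : QuadraticForm R M} {b : Basis I R M}

theorem involute_eq_neg_and_reverse_eq_self_iff
    (hb : Pairwise fun i j => Q.IsOrtho (b i) (b j)) (U : CliffordAlgebra Q) :
    involute U = -U ∧ reverse U = U ↔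
      ↑((b.cliffordAlgebra Q).repr U).support ⊆ {s : Finset I | s.card % 4 = 1} := by
  have neg_one_ne_one : (-1 : R) ≠ 1 := fun h => by
    have two_eq_zero : (2 : R) = 0 := by linear_combination -h
    simpa [two_eq_zero] using invOf_mul_self (2 : R)
  have hinv := (b.cliffordAlgebra Q).apply_eq_smul_iff_support_subset
    (f := involute.toLinearMap) (Basis.involute_cliffordAlgebra hb) (-1) U
  have hrev := (b.cliffordAlgebra Q).apply_eq_smul_iff_support_subset
    (f := reverse) (Basis.reverse_cliffordAlgebra hb) 1 U
  rw [neg_one_smul, AlgHom.toLinearMap_apply] at hinv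
  rw [one_smul] at hrev
  rw [hinv, hrev, ← Set.subset_inter_iff, ← Set.ofPred_and]
  simp only [neg_one_pow_eq_neg_one_iff_odd neg_one_ne_one,
    neg_one_pow_eq_one_iff_even neg_one_ne_one, Nat.odd_and_even_choose_two_iff]

end QuaternionType

theorem isOrtho_weightedSumSquares_basisFun {ι R : Type*} [Fintype ι] [CommSemiring R]
    (w : ι → R) :
    Pairwise fun i j =>
      (QuadraticMap.weightedSumSquares R w).IsOrtho (Pi.basisFun R ι i) (Pi.basisFun R ι j) := by
  classical
  intro i j hij
  simp only [QuadraticMap.isOrtho_def, QuadraticMap.weightedSumSquares_apply, Pi.basisFun_apply]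
  rw [Fintype.sum_eq_add i j hij fun k hk => by simp [hk.1, hk.2]]
  simp [hij, hij.symm, Pi.single_apply]

theorem finrank_quatType1 (p q : ℕ) :
    Module.finrank ℝ (quatType1 p q) = #{s : Finset (Fin (p + q)) | s.card % 4 = 1} := by
  set B := (Pi.basisFun ℝ (Fin (p + q))).cliffordAlgebra (Qpq p q)
  have quatType1_eq_span : quatType1 p q =
      Submodule.span ℝ (B '' ↑({s : Finset (Fin (p + q)) | s.card % 4 = 1} : Finset _)) := by
    ext U
    rw [B.mem_span_image, coe_filter_univ]
    exact involute_eq_neg_and_reverse_eq_self_iff (isOrtho_weightedSumSquares_basisFun _) U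
  rw [quatType1_eq_span, B.finrank_span_image]

theorem sum_pow_card_eq_one_add_pow {α R : Type*} [Fintype α] [CommSemiring R] (x : R) :
    ∑ s : Finset α, x ^ s.card = (1 + x) ^ Fintype.card α := by
  simpa [add_comm] using Finset.sum_pow_mul_eq_add_pow x 1 (univ : Finset α)

theorem one_add_pow_eq_sum_card_mod_four {α R : Type*} [Fintype α] [CommRing R] (x : R)
    (hx : x ^ 4 = 1) :
    (1 + x) ^ Fintype.card α = ∑ r ∈ range 4, (#{s : Finset α | s.card % 4 = r} : R) * x ^ r := by
  have hmod (k : ℕ) : x ^ k = x ^ (k % 4) := by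
    conv_lhs => rw [← Nat.div_add_mod k 4, pow_add, pow_mul, hx, one_pow, one_mul]
  rw [← sum_pow_card_eq_one_add_pow, ← sum_fiberwise_of_maps_to (g := fun s => s.card % 4)
    (t := range 4) fun s _ => mem_range.mpr (Nat.mod_lt _ four_pos)]
  refine sum_congr rfl fun r _ => ?_
  rw [← nsmul_eq_mul, ← sum_const]
  exact sum_congr rfl fun s hs => by rw [hmod, (mem_filter.mp hs).2]

theorem im_one_add_I_pow (n : ℕ) :
    ((1 + Complex.I) ^ n).im = √2 ^ n * Real.sin (Real.pi * n / 4) := by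
  have h : 1 + Complex.I =
      √2 * (Complex.cos ↑(Real.pi / 4) + Complex.sin ↑(Real.pi / 4) * Complex.I) := by
    rw [← Complex.ofReal_cos, ← Complex.ofReal_sin, Real.cos_pi_div_four, Real.sin_pi_div_four]
    apply Complex.ext <;> simp <;> ring_nf <;> norm_num
  rw [h, mul_pow, Complex.cos_add_sin_mul_I_pow, ← Complex.ofReal_pow, ← Complex.ofReal_natCast,
    ← Complex.ofReal_mul, ← Complex.ofReal_cos, ← Complex.ofReal_sin, Complex.im_ofReal_mul]
  simp only [Complex.add_im, Complex.ofReal_im, Complex.mul_im, Complex.ofReal_re, Complex.I_re,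
    Complex.I_im]
  ring_nf

theorem card_filter_card_mod_four_eq_one (α : Type*) [Fintype α] (h : Fintype.card α ≠ 0) :
    4 * (#{s : Finset α | s.card % 4 = 1} : ℝ) =
      2 ^ Fintype.card α + 2 * √2 ^ Fintype.card α * Real.sin (Real.pi * Fintype.card α / 4) := by
  have at_one := one_add_pow_eq_sum_card_mod_four (α := α) (1 : ℝ) (by norm_num)
  have at_neg_one := one_add_pow_eq_sum_card_mod_four (α := α) (-1 : ℝ) (by norm_num)
  have at_I := congrArg Complex.im
    (one_add_pow_eq_sum_card_mod_four (α := α) Complex.I Complex.I_pow_four)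
  simp [sum_range_succ, zero_pow h] at at_one at_neg_one at_I
  rw [im_one_add_I_pow] at at_I
  norm_num at at_one at_neg_one
  linarith

/-- `4 · dim = 2^n + 2·(√2)^n·sin(πn/4)`. -/
theorem statement1 (p q : ℕ) (hn : 1 ≤ p + q) :
    4 * (Module.finrank ℝ (quatType1 p q) : ℝ) =
      2 ^ (p + q) + 2 * Real.sqrt 2 ^ (p + q) * Real.sin (Real.pi * (p + q) / 4) := by
  rw [finrank_quatType1]
  simpa using card_filter_card_mod_four_eq_one (Fin (p + q)) (by simp; omega)
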